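/- Let p be an odd prime. The nonsingular model of the Artin-Mumford curve M: (x^p−x)(y^p−y)=1 over F_p has exactly 2p F_p-rational points, all lying over the two singular points (1:0:0) and (0:1:0) of the plane model; the branches at (1:0:0) correspond to the p tangent lines y = a, a ∈ F_p, and those at (0:1:0) to the lines x = b, b ∈ F_p. -/
import Mathlib


open MvPolynomial

/-- The homogenization `F = (X^p − X Z^{p−1})(Y^p − Y Z^{p−1}) − Z^{2p}` of the
Artin–Mumford equation `(x^p−x)(y^p−y) = 1` (variables `0 ↦ X, 1 ↦ Y, 2 ↦ Z`). -/
noncomputable def amProj' (p : ℕ) (K : Type*) [Field K] :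
    MvPolynomial (Fin 3) K :=
  (X 0 ^ p - X 0 * X 2 ^ (p - 1)) * (X 1 ^ p - X 1 * X 2 ^ (p - 1))
    - X 2 ^ (2 * p)

/-- Local equation of the plane model at `(1:0:0)` (variables `0 ↦ Y, 1 ↦ Z`). -/
noncomputable def amLoc₁ (p : ℕ) (K : Type*) [Field K] :
    MvPolynomial (Fin 2) K :=
  (1 - X 1 ^ (p - 1)) * (X 0 ^ p - X 0 * X 1 ^ (p - 1)) - X 1 ^ (2 * p)

/-- Local equation of the plane model at `(0:1:0)` (variables `0 ↦ X, 1 ↦ Z`). -/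
noncomputable def amLoc₂ (p : ℕ) (K : Type*) [Field K] :
    MvPolynomial (Fin 2) K :=
  (X 0 ^ p - X 0 * X 1 ^ (p - 1)) * (1 - X 1 ^ (p - 1)) - X 1 ^ (2 * p)


open Polynomial in
lemma my_univ_prod_X_sub_C (p : ℕ) [Fact p.Prime] :
    ∏ a : ZMod p, (Polynomial.X - Polynomial.C a) = Polynomial.X ^ p - Polynomial.X := by
  have h1 : 1 < p := (Fact.out : p.Prime).one_lt
  have hmonic : (Polynomial.X ^ p - Polynomial.X : (ZMod p)[X]).Monic := by
    apply (monic_X_pow p).sub_of_left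
    rw [degree_X_pow, degree_X]
    exact_mod_cast h1
  have hdeg : (Polynomial.X ^ p - Polynomial.X : (ZMod p)[X]).natDegree = p :=
    FiniteField.X_pow_card_sub_X_natDegree_eq _ h1
  have hroots : (Polynomial.X ^ p - Polynomial.X : (ZMod p)[X]).roots = Finset.univ.val := by
    have := FiniteField.roots_X_pow_card_sub_X (ZMod p)
    rwa [ZMod.card] at this
  have := prod_multiset_X_sub_C_of_monic_of_roots_card_eq hmonic
    (by rw [hroots, hdeg]; simp [ZMod.card])
  rw [hroots] at this
  rw [← this]
  rfl

open Polynomial in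
lemma my_scaleRoots_X_sub_C {R : Type*} [CommRing R] [Nontrivial R] (c w : R) :
    (Polynomial.X - Polynomial.C c).scaleRoots w = Polynomial.X - Polynomial.C (c * w) := by
  ext n
  rw [coeff_scaleRoots, natDegree_X_sub_C]
  rcases n with _ | _ | n <;>
    simp [Polynomial.coeff_X, Polynomial.coeff_C, mul_comm]

open Polynomial in
lemma my_prod_scaleRoots {p : ℕ} {R : Type*} [CommRing R] [IsDomain R]
    (s : Finset (ZMod p)) (f : ZMod p → R) (w : R) :
    (∏ a ∈ s, (Polynomial.X - Polynomial.C (f a))).scaleRoots w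
      = ∏ a ∈ s, (Polynomial.X - Polynomial.C (f a * w)) := by
  classical
  induction s using Finset.cons_induction with
  | empty => simpa using scaleRoots_C w (1 : R)
  | cons a s ha ih =>
    rw [Finset.prod_cons, Finset.prod_cons, mul_scaleRoots', my_scaleRoots_X_sub_C, ih]
    rw [(monic_X_sub_C (f a)).leadingCoeff,
      (monic_prod_of_monic _ _ fun i _ => monic_X_sub_C (f i)).leadingCoeff]
    simp

open Polynomial in
lemma my_scaleRoots_key (p : ℕ) [Fact p.Prime] {R : Type*} [CommRing R] [Nontrivial R] (w : R) :
    (Polynomial.X ^ p - Polynomial.X : R[X]).scaleRoots w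
      = Polynomial.X ^ p - Polynomial.C (w ^ (p - 1)) * Polynomial.X := by
  have h1 : 1 < p := (Fact.out : p.Prime).one_lt
  have hdeg : (Polynomial.X ^ p - Polynomial.X : R[X]).natDegree = p := by
    rw [natDegree_sub_eq_left_of_natDegree_lt] <;>
      simp [natDegree_X_pow, natDegree_X, h1]
  ext n
  rw [coeff_scaleRoots, hdeg]
  simp only [Polynomial.coeff_sub, Polynomial.coeff_X_pow, Polynomial.coeff_C_mul, Polynomial.coeff_X]
  by_cases hnp : n = p
  · subst hnp
    rw [if_neg (by omega : ¬ (1:ℕ) = n), Nat.sub_self, pow_zero]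
    ring
  · by_cases hn1 : n = 1
    · subst hn1
      simp only [if_neg (by omega : ¬ (1:ℕ) = p), if_neg (by omega : ¬ p = 1)]
      ring
    · rw [if_neg hnp, if_neg (by omega : ¬ (1:ℕ) = n)]
      ring

lemma my_prod_lin (p : ℕ) [Fact p.Prime] :
    (∏ a : ZMod p, (X 0 - C a * X 1 : MvPolynomial (Fin 2) (ZMod p)))
      = X 0 ^ p - X 0 * X 1 ^ (p - 1) := by
  have h1 : ∏ a : ZMod p,
      (Polynomial.X - Polynomial.C (C a : MvPolynomial (Fin 2) (ZMod p)))
        = Polynomial.X ^ p - Polynomial.X := by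
    have := congrArg (Polynomial.map (C : ZMod p →+* MvPolynomial (Fin 2) (ZMod p)))
      (my_univ_prod_X_sub_C p)
    simpa [Polynomial.map_prod] using this
  have h2 := congrArg (fun q => q.scaleRoots (X 1 : MvPolynomial (Fin 2) (ZMod p))) h1
  simp only [my_prod_scaleRoots, my_scaleRoots_key] at h2
  have h3 := congrArg (Polynomial.eval (X 0 : MvPolynomial (Fin 2) (ZMod p))) h2
  simp only [Polynomial.eval_prod, Polynomial.eval_sub, Polynomial.eval_mul,
    Polynomial.eval_pow, Polynomial.eval_X, Polynomial.eval_C] at h3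
  rw [h3]; ring


lemma my_hc (p : ℕ) [Fact p.Prime] :
    homogeneousComponent p (amLoc₁ p (ZMod p)) = X 0 ^ p - X 0 * X 1 ^ (p - 1) := by
  have hp2 : 2 ≤ p := (Fact.out : p.Prime).two_le
  have e : amLoc₁ p (ZMod p)
      = (X 0 ^ p - X 0 * X 1 ^ (p - 1))
        + (-(X 0 ^ p * X 1 ^ (p - 1)) + X 0 * (X 1 ^ (p - 1) * X 1 ^ (p - 1))
            - X 1 ^ (2 * p)) := by
    rw [amLoc₁]; ring
  have hXp : ((X 0 : MvPolynomial (Fin 2) (ZMod p)) ^ p).IsHomogeneous p := by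
    simpa using (isHomogeneous_X (ZMod p) (0 : Fin 2)).pow p
  have hX1 : ((X 0 : MvPolynomial (Fin 2) (ZMod p)) * X 1 ^ (p - 1)).IsHomogeneous p := by
    have := (isHomogeneous_X (ZMod p) (0 : Fin 2)).mul
      ((isHomogeneous_X (ZMod p) (1 : Fin 2)).pow (p - 1))
    simp only [one_mul] at this
    rwa [(by omega : 1 + (p - 1) = p)] at this
  have hT1 : ((X 0 : MvPolynomial (Fin 2) (ZMod p)) ^ p * X 1 ^ (p - 1)).IsHomogeneous
      (2 * p - 1) := by
    have := hXp.mul ((isHomogeneous_X (ZMod p) (1 : Fin 2)).pow (p - 1))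
    simp only [one_mul] at this
    rwa [(by omega : p + (p - 1) = 2 * p - 1)] at this
  have hT2 : ((X 0 : MvPolynomial (Fin 2) (ZMod p))
      * (X 1 ^ (p - 1) * X 1 ^ (p - 1))).IsHomogeneous (2 * p - 1) := by
    have := (isHomogeneous_X (ZMod p) (0 : Fin 2)).mul
      (((isHomogeneous_X (ZMod p) (1 : Fin 2)).pow (p - 1)).mul
        ((isHomogeneous_X (ZMod p) (1 : Fin 2)).pow (p - 1)))
    simp only [one_mul] at this
    rwa [(by omega : 1 + (p - 1 + (p - 1)) = 2 * p - 1)] at this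
  have hT3 : ((X 1 : MvPolynomial (Fin 2) (ZMod p)) ^ (2 * p)).IsHomogeneous (2 * p) := by
    simpa using (isHomogeneous_X (ZMod p) (1 : Fin 2)).pow (2 * p)
  rw [e, map_add, map_sub, map_sub, map_add, map_neg,
    homogeneousComponent_of_mem ((mem_homogeneousSubmodule _ _).mpr hXp),
    homogeneousComponent_of_mem ((mem_homogeneousSubmodule _ _).mpr hX1),
    homogeneousComponent_of_mem ((mem_homogeneousSubmodule _ _).mpr hT1),
    homogeneousComponent_of_mem ((mem_homogeneousSubmodule _ _).mpr hT2),
    homogeneousComponent_of_mem ((mem_homogeneousSubmodule _ _).mpr hT3),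
    if_pos rfl, if_pos rfl, if_neg (by omega), if_neg (by omega), if_neg (by omega)]
  ring


/-- For an odd prime `p`, the `F_p`-rational points of the plane
model of the Artin–Mumford curve are exactly the two singular points `(1:0:0)`
and `(0:1:0)`; the branches of the nonsingular model centered at `(1:0:0)`
correspond to the `p` distinct tangent lines `Y = aZ` (`a ∈ F_p`), those at
`(0:1:0)` to the lines `X = bZ` (`b ∈ F_p`), and all these `2p` branch points
are `F_p`-rational, so that the nonsingular model has exactly `2p`
`F_p`-rational points. -/
theorem stmt_8 (p : ℕ) [Fact p.Prime] (hodd : p ≠ 2) :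
    ({v : Fin 3 → ZMod p | v ≠ 0 ∧ eval v (amProj' p (ZMod p)) = 0}
        = {v : Fin 3 → ZMod p | ∃ c : ZMod p, c ≠ 0
            ∧ (v = c • ![1, 0, 0] ∨ v = c • ![0, 1, 0])})
    ∧ homogeneousComponent p (amLoc₁ p (ZMod p))
        = ∏ a : ZMod p, (X 0 - C a * X 1)
    ∧ homogeneousComponent p (amLoc₂ p (ZMod p))
        = ∏ b : ZMod p, (X 0 - C b * X 1)
    ∧ Function.Injective (fun a : ZMod p => (X 0 - C a * X 1 :
        MvPolynomial (Fin 2) (ZMod p)))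
    ∧ Nat.card (ZMod p ⊕ ZMod p) = 2 * p := by
  have hp : p.Prime := Fact.out
  have h1 : 1 < p := hp.one_lt
  refine ⟨?_, ?_, ?_, ?_, ?_⟩
  · ext v
    simp only [Set.mem_setOf_eq]
    constructor
    · rintro ⟨hv, heq⟩
      have heval : eval v (amProj' p (ZMod p))
          = (v 0 ^ p - v 0 * v 2 ^ (p - 1)) * (v 1 ^ p - v 1 * v 2 ^ (p - 1))
              - v 2 ^ (2 * p) := by
        simp [amProj']
      rw [heval, ZMod.pow_card, ZMod.pow_card] at heq
      by_cases h2 : v 2 = 0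
      · rw [h2, zero_pow (by omega : p - 1 ≠ 0), zero_pow (by omega : 2 * p ≠ 0)] at heq
        simp only [mul_zero, sub_zero] at heq
        rcases mul_eq_zero.mp heq with h0 | h0
        · have hv1 : v 1 ≠ 0 := by
            intro hx
            apply hv; funext i; fin_cases i <;> simp [h0, hx, h2]
          refine ⟨v 1, hv1, Or.inr ?_⟩
          funext i; fin_cases i <;> simp [h0, h2]
        · have hv0 : v 0 ≠ 0 := by
            intro hx
            apply hv; funext i; fin_cases i <;> simp [h0, hx, h2]
          refine ⟨v 0, hv0, Or.inl ?_⟩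
          funext i; fin_cases i <;> simp [h0, h2]
      · have hone : v 2 ^ (p - 1) = 1 := ZMod.pow_card_sub_one_eq_one h2
        exfalso
        rw [hone] at heq
        simp only [mul_one, sub_self, zero_mul, zero_sub, neg_eq_zero] at heq
        exact h2 ((pow_eq_zero_iff (by omega : 2 * p ≠ 0)).mp heq)
    · rintro ⟨c, hc, h | h⟩ <;> subst h <;> refine ⟨?_, ?_⟩
      · intro hx
        apply hc
        have := congrFun hx 0; simpa using this
      · simp [amProj', zero_pow (by omega : p - 1 ≠ 0), zero_pow (by omega : 2 * p ≠ 0),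
          zero_pow (by omega : p ≠ 0)]
      · intro hx
        apply hc
        have := congrFun hx 1; simpa using this
      · simp [amProj', zero_pow (by omega : p - 1 ≠ 0), zero_pow (by omega : 2 * p ≠ 0),
          zero_pow (by omega : p ≠ 0)]
  · rw [my_hc p, my_prod_lin p]
  · have e2 : amLoc₂ p (ZMod p) = amLoc₁ p (ZMod p) := by rw [amLoc₁, amLoc₂]; ring
    rw [e2, my_hc p, my_prod_lin p]
  · intro a b h
    simp only at h
    have hx : (X 1 : MvPolynomial (Fin 2) (ZMod p)) ≠ 0 := X_ne_zero _
    have h2 : (C a : MvPolynomial (Fin 2) (ZMod p)) * X 1 = C b * X 1 := by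
      linear_combination -h
    exact C_injective _ _ (mul_right_cancel₀ hx h2)
  · simp [Nat.card_sum, Nat.card_eq_fintype_card, ZMod.card, two_mul]
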